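/- arXiv:2311.15598 — 6 statements merged into one kernel-verified Lean document; each statement's English description precedes it below -/
import Mathlib

section
/- Let P1, P2 : J → (0,1) be functions on a finite index set J, and let (X(ω))_{ω∈J} be independent with X(ω) ~ Bernoulli(P1(ω)). Then P( Σ_{ω∈J} X(ω)·log(P2(ω)(1−P1(ω))/(P1(ω)(1−P2(ω)))) > Σ_{ω∈J} log((1−P1(ω))/(1−P2(ω))) ) ≤ exp(−I*/2), where I* = −2·Σ_{ω∈J} log(√(P1(ω)P2(ω)) + √((1−P1(ω))(1−P2(ω)))). -/
/-!
The event is `{∑ ω, L ω > 0}`, where `L ω` is the log-likelihood ratio of `Bernoulli (P2 ω)`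
against `Bernoulli (P1 ω)` evaluated at `X ω`. The Chernoff bound at `t = 1/2` together with
independence bounds its probability by `∏ ω, 𝔼[exp (L ω / 2)]`, and each factor is the
Bhattacharyya coefficient `√(P1 ω * P2 ω) + √((1 - P1 ω) * (1 - P2 ω)) = exp (-I_ω / 2)`, where
`I_ω` is the `ω`-th summand of `I*`.
-/

open MeasureTheory Real ProbabilityTheory

theorem ProbabilityTheory.iIndepFun.measureReal_sum_ge_le_exp_mul_prod_mgf
    {Ω ι : Type*} [MeasurableSpace Ω] {μ : Measure Ω} [Fintype ι] {X : ι → Ω → ℝ}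
    (h_indep : iIndepFun X μ) (h_meas : ∀ i, Measurable (X i)) {t : ℝ} (ht : 0 ≤ t)
    (h_int : ∀ i, Integrable (fun ω => exp (t * X i ω)) μ) (ε : ℝ) :
    μ.real {ω | ε ≤ ∑ i, X i ω} ≤ exp (-t * ε) * ∏ i, mgf (X i) μ t := by
  have := h_indep.isProbabilityMeasure
  have h := measure_ge_le_exp_mul_mgf ε ht
    (h_indep.integrable_exp_mul_sum h_meas (s := Finset.univ) fun i _ => h_int i)
  simpa only [h_indep.mgf_sum h_meas, Finset.sum_apply] using h

lemma disjoint_setOf_eq_one_setOf_eq_zero {α : Type*} (Y : α → ℝ) :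
    Disjoint {x | Y x = 1} {x | Y x = 0} :=
  Set.disjoint_left.2 fun _ (h1 : _ = 1) (h0 : _ = 0) => one_ne_zero (h1.symm.trans h0)

section Bernoulli

variable {Ω : Type*} [MeasurableSpace Ω] {μ : Measure Ω} [IsProbabilityMeasure μ]
  {Y : Ω → ℝ} {p : ℝ} (hY : Measurable Y) (hp : p ∈ Set.Icc (0 : ℝ) 1)
  (h1 : μ {x | Y x = 1} = ENNReal.ofReal p) (h0 : μ {x | Y x = 0} = ENNReal.ofReal (1 - p))
include hY hp h1 h0

lemma ae_mem_setOf_eq_one_union_setOf_eq_zero :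
    ∀ᵐ x ∂μ, x ∈ {x | Y x = 1} ∪ {x | Y x = 0} := by
  have hmeas0 : MeasurableSet {x | Y x = 0} := hY (measurableSet_singleton 0)
  have hmeas1 : MeasurableSet {x | Y x = 1} := hY (measurableSet_singleton 1)
  rw [ae_mem_iff_measure_eq (hmeas1.union hmeas0).nullMeasurableSet,
    measure_union (disjoint_setOf_eq_one_setOf_eq_zero Y) hmeas0, h1, h0,
    ← ENNReal.ofReal_add hp.1 (by linarith [hp.2]), add_sub_cancel, ENNReal.ofReal_one,
    measure_univ]

lemma integrable_comp_of_bernoulli (g : ℝ → ℝ) : Integrable (fun x => g (Y x)) μ := by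
  rw [← Measure.restrict_eq_self_of_ae_mem (ae_mem_setOf_eq_one_union_setOf_eq_zero hY hp h1 h0)]
  refine IntegrableOn.union (f := fun x => g (Y x)) ?_ ?_
  · exact (integrableOn_const (C := g 1)).congr_fun (fun x (hx : Y x = 1) => by rw [hx])
      (hY (measurableSet_singleton 1))
  · exact (integrableOn_const (C := g 0)).congr_fun (fun x (hx : Y x = 0) => by rw [hx])
      (hY (measurableSet_singleton 0))

lemma integral_comp_of_bernoulli (g : ℝ → ℝ) :
    ∫ x, g (Y x) ∂μ = p * g 1 + (1 - p) * g 0 := by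
  have hmeas0 : MeasurableSet {x | Y x = 0} := hY (measurableSet_singleton 0)
  have hmeas1 : MeasurableSet {x | Y x = 1} := hY (measurableSet_singleton 1)
  have hint := integrable_comp_of_bernoulli hY hp h1 h0 g
  rw [← Measure.restrict_eq_self_of_ae_mem (ae_mem_setOf_eq_one_union_setOf_eq_zero hY hp h1 h0),
    setIntegral_union (disjoint_setOf_eq_one_setOf_eq_zero Y) hmeas0 hint.integrableOn
      hint.integrableOn,
    setIntegral_congr_fun hmeas1 (g := fun _ => g 1) (fun x (hx : Y x = 1) => by rw [hx]),
    setIntegral_congr_fun hmeas0 (g := fun _ => g 0) (fun x (hx : Y x = 0) => by rw [hx]),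
    setIntegral_const, setIntegral_const, measureReal_def, measureReal_def, h1, h0,
    ENNReal.toReal_ofReal hp.1, ENNReal.toReal_ofReal (by linarith [hp.2]), smul_eq_mul,
    smul_eq_mul]

end Bernoulli

/-- The log-likelihood ratio `log (Bern q {z} / Bern p {z})` at `z ∈ {0, 1}`, written as an affine
function of `z`. -/
noncomputable def bernoulliLLR (p q z : ℝ) : ℝ :=
  z * log (q * (1 - p) / (p * (1 - q))) - log ((1 - p) / (1 - q))

lemma bernoulliLLR_one {p q : ℝ} (hp₀ : p ≠ 0) (hq₀ : q ≠ 0) (hp₁ : p ≠ 1) (hq₁ : q ≠ 1) :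
    bernoulliLLR p q 1 = log (q / p) := by
  have hp₁' : 1 - p ≠ 0 := sub_ne_zero.2 hp₁.symm
  have hq₁' : 1 - q ≠ 0 := sub_ne_zero.2 hq₁.symm
  rw [bernoulliLLR, one_mul, ← log_div (by positivity) (by positivity)]
  congr 1
  field_simp

lemma bernoulliLLR_zero (p q : ℝ) : bernoulliLLR p q 0 = log ((1 - q) / (1 - p)) := by
  rw [bernoulliLLR, zero_mul, zero_sub, ← log_inv, inv_div]

lemma mul_exp_half_mul_log_div {p q : ℝ} (hp : 0 < p) (hq : 0 < q) :
    p * exp (1 / 2 * log (q / p)) = √(p * q) := by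
  have hsqrt : exp (1 / 2 * log (q / p)) = √(q / p) := by
    rw [sqrt_eq_rpow, rpow_def_of_pos (div_pos hq hp), mul_comm]
  calc p * exp (1 / 2 * log (q / p)) = √(p * p * (q / p)) := by
        rw [hsqrt, sqrt_mul (mul_self_nonneg p), sqrt_mul_self hp.le]
    _ = √(p * q) := by
        congr 1
        field_simp

lemma mgf_bernoulliLLR {Ω : Type*} [MeasurableSpace Ω] {μ : Measure Ω} [IsProbabilityMeasure μ]
    {Y : Ω → ℝ} {p q : ℝ} (hY : Measurable Y) (hp : p ∈ Set.Ioo (0 : ℝ) 1)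
    (hq : q ∈ Set.Ioo (0 : ℝ) 1) (h1 : μ {x | Y x = 1} = ENNReal.ofReal p)
    (h0 : μ {x | Y x = 0} = ENNReal.ofReal (1 - p)) :
    mgf (fun x => bernoulliLLR p q (Y x)) μ (1 / 2) = √(p * q) + √((1 - p) * (1 - q)) := by
  rw [mgf, integral_comp_of_bernoulli hY (Set.Ioo_subset_Icc_self hp) h1 h0
    (fun z => exp (1 / 2 * bernoulliLLR p q z)), bernoulliLLR_zero,
    bernoulliLLR_one hp.1.ne' hq.1.ne' hp.2.ne hq.2.ne, mul_exp_half_mul_log_div hp.1 hq.1,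
    mul_exp_half_mul_log_div (sub_pos.2 hp.2) (sub_pos.2 hq.2)]

/-- Oracle Chernoff bound for independent Bernoulli entries: the likelihood-ratio test
mis-clustering probability is at most `exp(-I*/2)` where `I*` is the sum of
Rényi-1/2 divergences between `Bernoulli (P1 ω)` and `Bernoulli (P2 ω)`. -/
theorem bernoulli_loglik_tail_bound
    {Ω : Type*} [MeasurableSpace Ω] (μ : Measure Ω) [IsProbabilityMeasure μ]
    {J : Type*} [Fintype J]
    (P1 P2 : J → ℝ) (hP1 : ∀ ω, P1 ω ∈ Set.Ioo (0:ℝ) 1) (hP2 : ∀ ω, P2 ω ∈ Set.Ioo (0:ℝ) 1)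
    (X : J → Ω → ℝ) (hX : ∀ ω, Measurable (X ω))
    (hind : iIndepFun X μ)
    (hd1 : ∀ ω, μ {a | X ω a = 1} = ENNReal.ofReal (P1 ω))
    (hd0 : ∀ ω, μ {a | X ω a = 0} = ENNReal.ofReal (1 - P1 ω)) :
    (μ {a | ∑ ω, X ω a * Real.log (P2 ω * (1 - P1 ω) / (P1 ω * (1 - P2 ω)))
        > ∑ ω, Real.log ((1 - P1 ω) / (1 - P2 ω))}).toReal
      ≤ Real.exp
          (-(-2 * ∑ ω, Real.log (Real.sqrt (P1 ω * P2 ω)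
              + Real.sqrt ((1 - P1 ω) * (1 - P2 ω)))) / 2) := by
  set L : J → Ω → ℝ := fun ω x => bernoulliLLR (P1 ω) (P2 ω) (X ω x)
  have hLLR_meas : ∀ ω, Measurable (bernoulliLLR (P1 ω) (P2 ω)) := fun ω => by
    unfold bernoulliLLR; fun_prop
  have hL_meas : ∀ ω, Measurable (L ω) := fun ω => (hLLR_meas ω).comp (hX ω)
  have hL_indep : iIndepFun L μ := hind.comp _ hLLR_meas
  have hL_int : ∀ ω, Integrable (fun x => exp (1 / 2 * L ω x)) μ := fun ω =>
    integrable_comp_of_bernoulli (hX ω) (Set.Ioo_subset_Icc_self (hP1 ω)) (hd1 ω) (hd0 ω)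
      (fun z => exp (1 / 2 * bernoulliLLR (P1 ω) (P2 ω) z))
  have hevent : {a | ∑ ω, X ω a * log (P2 ω * (1 - P1 ω) / (P1 ω * (1 - P2 ω)))
      > ∑ ω, log ((1 - P1 ω) / (1 - P2 ω))} ⊆ {a | 0 ≤ ∑ ω, L ω a} := fun a ha => by
    simp only [Set.mem_ofPred_eq, L, bernoulliLLR, Finset.sum_sub_distrib] at ha ⊢
    linarith
  have hcoeff_pos : ∀ ω, 0 < √(P1 ω * P2 ω) + √((1 - P1 ω) * (1 - P2 ω)) := fun ω =>
    add_pos_of_pos_of_nonneg (sqrt_pos.2 (mul_pos (hP1 ω).1 (hP2 ω).1)) (sqrt_nonneg _)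
  calc (μ _).toReal ≤ μ.real {a | 0 ≤ ∑ ω, L ω a} := measureReal_mono hevent
    _ ≤ exp (-(1 / 2) * 0) * ∏ ω, mgf (L ω) μ (1 / 2) :=
        hL_indep.measureReal_sum_ge_le_exp_mul_prod_mgf hL_meas (by norm_num) hL_int 0
    _ = ∏ ω, (√(P1 ω * P2 ω) + √((1 - P1 ω) * (1 - P2 ω))) := by
        rw [mul_zero, exp_zero, one_mul]
        exact Finset.prod_congr rfl fun ω _ =>
          mgf_bernoulliLLR (hX ω) (hP1 ω) (hP2 ω) (hd1 ω) (hd0 ω)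
    _ = exp (∑ ω, log (√(P1 ω * P2 ω) + √((1 - P1 ω) * (1 - P2 ω)))) := by
        rw [exp_sum]
        exact Finset.prod_congr rfl fun ω _ => (exp_log (hcoeff_pos ω)).symm
    _ = _ := by congr 1; ring
end

section
/- Let P1, P2 : J → (0,∞) be functions on a finite index set J, and let (X(ω))_{ω∈J} be independent with X(ω) ~ Poisson(P1(ω)). Then P( Σ_{ω∈J} X(ω)·log(P2(ω)/P1(ω)) > Σ_{ω∈J} (P2(ω) − P1(ω)) ) ≤ exp(−I*/2), where I* = Σ_{ω∈J} (√(P1(ω)) − √(P2(ω)))². -/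
open MeasureTheory Real ProbabilityTheory
open scoped NNReal Nat

/-!
Chernoff's bound at `t = 1/2` applied to `S = ∑ X(ω) log (P2 ω / P1 ω)`. A Poisson(`λ`) variable has
`𝔼 exp (s X) = exp (λ (eˢ - 1))`, and `exp (log (P2 / P1) / 2) = √(P2 / P1)`, so by independence
`log 𝔼 exp (S / 2) = ∑ (√(P1 ω P2 ω) - P1 ω)`. Subtracting half the threshold `∑ (P2 ω - P1 ω)`
leaves exactly `-½ ∑ (√(P1 ω) - √(P2 ω))²`.
-/

namespace ProbabilityTheory

lemma hasSum_poissonPMF_mul_exp_mul (r : ℝ≥0) (t : ℝ) :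
    HasSum (fun n : ℕ ↦ exp (-r) * r ^ n / n ! * exp (t * n)) (exp (r * (exp t - 1))) := by
  have hterm (n : ℕ) :
      exp (-r) * r ^ n / n ! * exp (t * n) = exp (-r) * ((r * exp t) ^ n / n !) := by
    rw [mul_pow, ← exp_nat_mul, mul_comm t]
    ring
  have hvalue : exp (r * (exp t - 1)) = exp (-r) * exp (r * exp t) := by
    rw [← exp_add]
    ring_nf
  have hexp : HasSum (fun n : ℕ ↦ ((r : ℝ) * exp t) ^ n / n !) (exp (r * exp t)) := by
    rw [exp_eq_exp_ℝ]
    exact NormedSpace.expSeries_div_hasSum_exp _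
  simpa only [hterm, hvalue] using hexp.mul_left (exp (-r))

lemma integrable_exp_mul_poissonMeasure (r : ℝ≥0) (t : ℝ) :
    Integrable (fun n : ℕ ↦ exp (t * n)) Po(r) := by
  rw [integrable_poissonMeasure_iff]
  simpa [abs_of_pos (exp_pos _)] using (hasSum_poissonPMF_mul_exp_mul r t).summable

lemma mgf_poissonMeasure (r : ℝ≥0) (t : ℝ) :
    mgf (fun n : ℕ ↦ (n : ℝ)) Po(r) t = exp (r * (exp t - 1)) := by
  rw [mgf, integral_poissonMeasure]
  exact (hasSum_poissonPMF_mul_exp_mul r t).tsum_eq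

section PoissonLaw

variable {Ω : Type*} [MeasurableSpace Ω] {μ : Measure Ω}

lemma hasLaw_poissonMeasure_of_measure_eq {X : Ω → ℕ} (hX : Measurable X) {r : ℝ≥0}
    (h : ∀ k : ℕ, μ {a | X a = k} = ENNReal.ofReal (exp (-r) * r ^ k / k !)) :
    HasLaw X Po(r) μ where
  map_eq := Measure.ext_of_singleton fun k ↦ by
    rw [Measure.map_apply hX (measurableSet_singleton k), poissonMeasure_singleton]
    exact h k

lemma HasLaw.integrable_exp_mul_of_poissonMeasure {X : Ω → ℕ} {r : ℝ≥0}
    (hX : HasLaw X Po(r) μ) (t : ℝ) : Integrable (fun a ↦ exp (t * X a)) μ := by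
  have h := integrable_exp_mul_poissonMeasure r t
  rw [← hX.map_eq] at h
  exact (integrable_map_measure .of_discrete hX.aemeasurable).1 h

lemma HasLaw.mgf_of_poissonMeasure {X : Ω → ℕ} {r : ℝ≥0} (hX : HasLaw X Po(r) μ) (t : ℝ) :
    mgf (fun a ↦ (X a : ℝ)) μ t = exp (r * (exp t - 1)) := by
  rw [← mgf_poissonMeasure r t, ← hX.map_eq, mgf_map hX.aemeasurable .of_discrete]
  rfl

lemma measureReal_le_sum_mul_le_exp_of_hasLaw_poissonMeasure [IsProbabilityMeasure μ] {ι : Type*}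
    [Fintype ι] {X : ι → Ω → ℕ} {r : ι → ℝ≥0} (hX : ∀ i, Measurable (X i))
    (hind : iIndepFun X μ) (hlaw : ∀ i, HasLaw (X i) Po(r i) μ) (c : ι → ℝ) (ε : ℝ) {t : ℝ}
    (ht : 0 ≤ t) :
    μ.real {a | ε ≤ ∑ i, c i * X i a} ≤ exp (-t * ε + ∑ i, r i * (exp (t * c i) - 1)) := by
  set Y : ι → Ω → ℝ := fun i a ↦ c i * X i a
  have hYmeas (i : ι) : Measurable (Y i) :=
    (measurable_from_nat (f := fun k : ℕ ↦ c i * k)).comp (hX i)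
  have hYind : iIndepFun Y μ := hind.comp (fun i (k : ℕ) ↦ c i * k) fun _ ↦ measurable_from_nat
  have hYint (i : ι) : Integrable (fun a ↦ exp (t * Y i a)) μ := by
    convert (hlaw i).integrable_exp_mul_of_poissonMeasure (t * c i) using 3
    ring
  have hYmgf (i : ι) : mgf (Y i) μ t = exp (r i * (exp (t * c i) - 1)) := by
    rw [mgf_const_mul, mul_comm, (hlaw i).mgf_of_poissonMeasure]
  calc μ.real {a | ε ≤ ∑ i, c i * X i a} = μ.real {a | ε ≤ (∑ i, Y i) a} := by
        simp only [Finset.sum_apply, Y]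
    _ ≤ exp (-t * ε) * mgf (∑ i, Y i) μ t :=
        measure_ge_le_exp_mul_mgf ε ht (hYind.integrable_exp_mul_sum hYmeas fun i _ ↦ hYint i)
    _ = exp (-t * ε + ∑ i, r i * (exp (t * c i) - 1)) := by
        rw [hYind.mgf_sum hYmeas, Finset.prod_congr rfl fun i _ ↦ hYmgf i, ← exp_sum, ← exp_add]

end PoissonLaw

end ProbabilityTheory

lemma mul_exp_half_log_div_sub_one {p q : ℝ} (hp : 0 < p) (hq : 0 < q) :
    p * (exp (1 / 2 * log (q / p)) - 1) = √p * √q - p := by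
  have hsqrt : exp (1 / 2 * log (q / p)) = √(q / p) := by
    rw [sqrt_eq_rpow, rpow_def_of_pos (div_pos hq hp), mul_comm]
  rw [hsqrt, sqrt_div' q hp.le, mul_sub, mul_one, ← mul_div_assoc, mul_comm, mul_div_assoc,
    div_sqrt, mul_comm]

/-- Oracle Chernoff bound for independent Poisson entries: the likelihood-ratio test
mis-clustering probability is at most `exp(-I*/2)` with
`I* = Σ (√(P1 ω) - √(P2 ω))²`. -/
theorem poisson_loglik_tail_bound
    {Ω : Type*} [MeasurableSpace Ω] (μ : Measure Ω) [IsProbabilityMeasure μ]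
    {J : Type*} [Fintype J]
    (P1 P2 : J → ℝ) (hP1 : ∀ ω, 0 < P1 ω) (hP2 : ∀ ω, 0 < P2 ω)
    (X : J → Ω → ℕ) (hX : ∀ ω, Measurable (X ω))
    (hind : iIndepFun X μ)
    (hd : ∀ ω, ∀ k : ℕ, μ {a | X ω a = k}
        = ENNReal.ofReal (Real.exp (-(P1 ω)) * (P1 ω) ^ k / (Nat.factorial k))) :
    (μ {a | ∑ ω, (X ω a : ℝ) * Real.log (P2 ω / P1 ω)
        > ∑ ω, (P2 ω - P1 ω)}).toReal
      ≤ Real.exp (-(∑ ω, (Real.sqrt (P1 ω) - Real.sqrt (P2 ω)) ^ 2) / 2) := by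
  let r : J → ℝ≥0 := fun ω ↦ ⟨P1 ω, (hP1 ω).le⟩
  have hlaw (ω : J) : HasLaw (X ω) Po(r ω) μ := hasLaw_poissonMeasure_of_measure_eq (hX ω) (hd ω)
  have hexponent : -(1 / 2) * ∑ ω, (P2 ω - P1 ω)
      + ∑ ω, r ω * (exp (1 / 2 * log (P2 ω / P1 ω)) - 1)
      = -(∑ ω, (√(P1 ω) - √(P2 ω)) ^ 2) / 2 := by
    rw [Finset.mul_sum, ← Finset.sum_add_distrib, ← Finset.sum_neg_distrib, Finset.sum_div]
    refine Finset.sum_congr rfl fun ω _ ↦ ?_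
    change _ + P1 ω * _ = _
    rw [mul_exp_half_log_div_sub_one (hP1 ω) (hP2 ω)]
    linear_combination (sq_sqrt (hP1 ω).le + sq_sqrt (hP2 ω).le) / 2
  calc (μ {a | ∑ ω, (X ω a : ℝ) * log (P2 ω / P1 ω) > ∑ ω, (P2 ω - P1 ω)}).toReal
      ≤ μ.real {a | ∑ ω, (P2 ω - P1 ω) ≤ ∑ ω, log (P2 ω / P1 ω) * X ω a} :=
        measureReal_mono <| Set.ofPred_subset_ofPred.2 fun _ ha ↦ by
          simpa only [mul_comm] using ha.le
    _ ≤ exp (-(∑ ω, (√(P1 ω) - √(P2 ω)) ^ 2) / 2) := by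
        rw [← hexponent]
        exact measureReal_le_sum_mul_le_exp_of_hasLaw_poissonMeasure hX hind hlaw _ _ (by norm_num)
end

section
/- Let d be a positive integer and p1, p2 ∈ (0,1). If X ~ Binomial(d, p1), then P( X·log(p2(1−p1)/(p1(1−p2))) ≥ d·log((1−p1)/(1−p2)) ) ≤ exp(−I*/2), where I* = −2d·log(√(p1·p2) + √((1−p1)(1−p2))). -/
open MeasureTheory Real

lemma binom_key_ineq (p1 p2 q1 q2 : ℝ) (hp1 : 0 < p1) (hp2 : 0 < p2)
    (hq1 : 0 < q1) (hq2 : 0 < q2) (k m : ℕ)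
    (hcond : (k:ℝ) * Real.log (p2 * q1 / (p1 * q2))
      ≥ ((k:ℝ) + m) * Real.log (q1 / q2)) :
    p1 ^ k * q1 ^ m ≤ Real.sqrt (p1 * p2) ^ k * Real.sqrt (q1 * q2) ^ m := by
  have ha : (0:ℝ) < Real.sqrt (p1 * p2) := Real.sqrt_pos.2 (by positivity)
  have hb : (0:ℝ) < Real.sqrt (q1 * q2) := Real.sqrt_pos.2 (by positivity)
  have hlr : Real.log (p2 * q1 / (p1 * q2))
      = Real.log p2 + Real.log q1 - (Real.log p1 + Real.log q2) := by
    rw [Real.log_div (by positivity) (by positivity),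
      Real.log_mul (ne_of_gt hp2) (ne_of_gt hq1),
      Real.log_mul (ne_of_gt hp1) (ne_of_gt hq2)]
  have hlq : Real.log (q1 / q2) = Real.log q1 - Real.log q2 :=
    Real.log_div (ne_of_gt hq1) (ne_of_gt hq2)
  have hla : Real.log (Real.sqrt (p1 * p2)) = (Real.log p1 + Real.log p2) / 2 := by
    rw [Real.log_sqrt (by positivity), Real.log_mul (ne_of_gt hp1) (ne_of_gt hp2)]
  have hlb : Real.log (Real.sqrt (q1 * q2)) = (Real.log q1 + Real.log q2) / 2 := by
    rw [Real.log_sqrt (by positivity), Real.log_mul (ne_of_gt hq1) (ne_of_gt hq2)]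
  rw [hlr, hlq] at hcond
  have h1 : p1 ^ k * q1 ^ m
      = Real.exp ((k:ℝ) * Real.log p1 + (m:ℝ) * Real.log q1) := by
    rw [Real.exp_add, Real.exp_nat_mul, Real.exp_nat_mul, Real.exp_log hp1,
      Real.exp_log hq1]
  have h2 : Real.sqrt (p1 * p2) ^ k * Real.sqrt (q1 * q2) ^ m
      = Real.exp ((k:ℝ) * Real.log (Real.sqrt (p1 * p2))
          + (m:ℝ) * Real.log (Real.sqrt (q1 * q2))) := by
    rw [Real.exp_add, Real.exp_nat_mul, Real.exp_nat_mul, Real.exp_log ha,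
      Real.exp_log hb]
  rw [h1, h2, Real.exp_le_exp, hla, hlb]
  nlinarith [hcond]

/-- Chernoff bound for the Binomial likelihood-ratio test: for `X ~ Bin(d, p1)`,
`P(X log(p2(1-p1)/(p1(1-p2))) ≥ d log((1-p1)/(1-p2))) ≤ exp(-I*/2)` with
`I* = -2 d log(√(p1 p2) + √((1-p1)(1-p2)))`. -/
theorem binomial_loglik_tail_bound
    {Ω : Type*} [MeasurableSpace Ω] (μ : Measure Ω) [IsProbabilityMeasure μ]
    (d : ℕ) (hd : 0 < d)
    (p1 p2 : ℝ) (hp1 : p1 ∈ Set.Ioo (0:ℝ) 1) (hp2 : p2 ∈ Set.Ioo (0:ℝ) 1)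
    (X : Ω → ℕ)
    (hX : ∀ k : ℕ, μ {a | X a = k}
        = ENNReal.ofReal ((d.choose k : ℝ) * p1 ^ k * (1 - p1) ^ (d - k))) :
    (μ {a | (X a : ℝ) * Real.log (p2 * (1 - p1) / (p1 * (1 - p2)))
        ≥ (d : ℝ) * Real.log ((1 - p1) / (1 - p2))}).toReal
      ≤ Real.exp
          (-(-2 * (d : ℝ)
              * Real.log (Real.sqrt (p1 * p2) + Real.sqrt ((1 - p1) * (1 - p2)))) / 2) := by
  obtain ⟨hp1a, hp1b⟩ := hp1
  obtain ⟨hp2a, hp2b⟩ := hp2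
  have hq1 : (0:ℝ) < 1 - p1 := by linarith
  have hq2 : (0:ℝ) < 1 - p2 := by linarith
  set a := Real.sqrt (p1 * p2) with ha_def
  set b := Real.sqrt ((1 - p1) * (1 - p2)) with hb_def
  have ha : 0 < a := Real.sqrt_pos.2 (by positivity)
  have hb : 0 < b := Real.sqrt_pos.2 (by positivity)
  have hab : 0 < a + b := by linarith
  -- rewrite RHS
  have hRHS : Real.exp (-(-2 * (d : ℝ) * Real.log (a + b)) / 2) = (a + b) ^ d := by
    have : -(-2 * (d : ℝ) * Real.log (a + b)) / 2 = (d : ℝ) * Real.log (a + b) := by ring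
    rw [this, Real.exp_nat_mul, Real.exp_log hab]
  rw [hRHS]
  set r := Real.log (p2 * (1 - p1) / (p1 * (1 - p2))) with hr_def
  set t := (d : ℝ) * Real.log ((1 - p1) / (1 - p2)) with ht_def
  -- the event is contained in a countable union
  have hsub : {ω | (X ω : ℝ) * r ≥ t}
      ⊆ ⋃ k : ℕ, {ω | X ω = k ∧ (k : ℝ) * r ≥ t} := by
    intro ω hω
    exact Set.mem_iUnion.2 ⟨X ω, rfl, hω⟩
  have hbound : ∀ k : ℕ, μ {ω | X ω = k ∧ (k : ℝ) * r ≥ t}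
      ≤ ENNReal.ofReal ((d.choose k : ℝ) * a ^ k * b ^ (d - k)) := by
    intro k
    by_cases hk : (k : ℝ) * r ≥ t
    · have hset : {ω | X ω = k ∧ (k : ℝ) * r ≥ t} = {ω | X ω = k} := by
        ext ω; simp [hk]
      rw [hset, hX k]
      apply ENNReal.ofReal_le_ofReal
      by_cases hkd : k ≤ d
      · have hkey : p1 ^ k * (1 - p1) ^ (d - k) ≤ a ^ k * b ^ (d - k) := by
          apply binom_key_ineq p1 p2 (1 - p1) (1 - p2) hp1a hp2a hq1 hq2
          have : ((k : ℝ) + (d - k : ℕ)) = (d : ℝ) := by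
            push_cast [Nat.cast_sub hkd]
            ring
          rw [this]
          exact hk
        have hc : (0:ℝ) ≤ (d.choose k : ℝ) := by positivity
        calc (d.choose k : ℝ) * p1 ^ k * (1 - p1) ^ (d - k)
            = (d.choose k : ℝ) * (p1 ^ k * (1 - p1) ^ (d - k)) := by ring
          _ ≤ (d.choose k : ℝ) * (a ^ k * b ^ (d - k)) :=
              mul_le_mul_of_nonneg_left hkey hc
          _ = (d.choose k : ℝ) * a ^ k * b ^ (d - k) := by ring
      · have : d.choose k = 0 := Nat.choose_eq_zero_of_lt (by omega)
        simp [this]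
    · have hset : {ω | X ω = k ∧ (k : ℝ) * r ≥ t} = ∅ := by
        ext ω; simp [hk]
      rw [hset]
      simp
  -- sum of the bounds
  have htsum : ∑' k : ℕ, ENNReal.ofReal ((d.choose k : ℝ) * a ^ k * b ^ (d - k))
      = ENNReal.ofReal ((a + b) ^ d) := by
    rw [tsum_eq_sum (s := Finset.range (d + 1))
      (by
        intro k hk
        have : d.choose k = 0 := Nat.choose_eq_zero_of_lt (by
          simp [Finset.mem_range] at hk; omega)
        simp [this])]
    rw [← ENNReal.ofReal_sum_of_nonneg (by
      intro k _
      positivity)]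
    congr 1
    rw [add_pow]
    apply Finset.sum_congr rfl
    intro k _
    ring
  have hmu : μ {ω | (X ω : ℝ) * r ≥ t} ≤ ENNReal.ofReal ((a + b) ^ d) := by
    calc μ {ω | (X ω : ℝ) * r ≥ t}
        ≤ μ (⋃ k : ℕ, {ω | X ω = k ∧ (k : ℝ) * r ≥ t}) := measure_mono hsub
      _ ≤ ∑' k : ℕ, μ {ω | X ω = k ∧ (k : ℝ) * r ≥ t} := measure_iUnion_le _
      _ ≤ ∑' k : ℕ, ENNReal.ofReal ((d.choose k : ℝ) * a ^ k * b ^ (d - k)) :=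
          ENNReal.tsum_le_tsum hbound
      _ = ENNReal.ofReal ((a + b) ^ d) := htsum
  exact ENNReal.toReal_le_of_le_ofReal (by positivity) hmu
end

section
/- Let θ1, θ2 > 0 with θ1 ≠ θ2, and X ~ Poisson(θ1). Then P( X·log(θ2/θ1) ≥ θ2 − θ1 ) ≤ exp(−(√θ1 − √θ2)²/2). -/
/-!
Chernoff's bound `P(b ≤ c X) ≤ e^{-t b} E[e^{t c X}]`, with the Poisson exponential moment
`E[e^{s X}] = exp(θ₁ (e^s - 1))`, taken at `c = log(θ₂/θ₁)`, `b = θ₂ - θ₁` and `t = 1/2`: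
then `θ₁ e^{c/2} = √(θ₁θ₂)` and the exponent is `√(θ₁θ₂) - (θ₁ + θ₂)/2 = -(√θ₁ - √θ₂)²/2`.
Since `X` is not assumed measurable, Markov's inequality is replaced by covering the event
with the level sets `{X = k}` and using countable subadditivity of the outer measure.
-/

open MeasureTheory Real
open scoped ENNReal Nat

theorem hasSum_exp_mul_poisson (θ s : ℝ) :
    HasSum (fun k : ℕ => exp (s * k) * (exp (-θ) * θ ^ k / k !)) (exp (θ * (exp s - 1))) := by
  convert! (NormedSpace.expSeries_div_hasSum_exp (θ * exp s)).mul_left (exp (-θ)) using 1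
  · funext k
    rw [mul_pow, ← exp_nat_mul]
    ring_nf
  · rw [← exp_eq_exp_ℝ, ← exp_add]
    ring_nf

theorem measure_preimage_le_tsum_mul {Ω : Type*} [MeasurableSpace Ω] (μ : Measure Ω)
    (X : Ω → ℕ) {S : Set ℕ} {w : ℕ → ℝ≥0∞} (hw : ∀ k ∈ S, 1 ≤ w k) :
    μ (X ⁻¹' S) ≤ ∑' k, w k * μ (X ⁻¹' {k}) := by
  calc μ (X ⁻¹' S) ≤ μ (⋃ k, X ⁻¹' ({k} ∩ S)) :=
        measure_mono fun a ha => Set.mem_iUnion.2 ⟨X a, rfl, ha⟩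
    _ ≤ ∑' k, μ (X ⁻¹' ({k} ∩ S)) := measure_iUnion_le _
    _ ≤ ∑' k, w k * μ (X ⁻¹' {k}) := by
        refine ENNReal.tsum_le_tsum fun k => ?_
        by_cases hk : k ∈ S
        · calc μ (X ⁻¹' ({k} ∩ S)) ≤ μ (X ⁻¹' {k}) := measure_mono fun a ha => ha.1
            _ ≤ w k * μ (X ⁻¹' {k}) := le_mul_of_one_le_left' (hw k hk)
        · simp [Set.singleton_inter_eq_empty.2 hk]

theorem poisson_chernoff_bound {Ω : Type*} [MeasurableSpace Ω] (μ : Measure Ω) {θ : ℝ}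
    (hθ : 0 ≤ θ) {X : Ω → ℕ}
    (hX : ∀ k : ℕ, μ {a | X a = k} = ENNReal.ofReal (exp (-θ) * θ ^ k / k !))
    {t : ℝ} (ht : 0 ≤ t) (b c : ℝ) :
    μ {a | b ≤ X a * c} ≤ ENNReal.ofReal (exp (θ * (exp (t * c) - 1) - t * b)) := by
  have hsum := (hasSum_exp_mul_poisson θ (t * c)).mul_left (exp (-(t * b)))
  have hweight : ∀ k ∈ {k : ℕ | b ≤ k * c}, 1 ≤ ENNReal.ofReal (exp (t * (k * c - b))) :=
    fun k hk => ENNReal.one_le_ofReal.2 (one_le_exp (mul_nonneg ht (sub_nonneg.2 hk)))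
  calc μ {a | b ≤ X a * c}
      ≤ ∑' k : ℕ, ENNReal.ofReal (exp (t * (k * c - b))) * μ (X ⁻¹' {k}) :=
        measure_preimage_le_tsum_mul μ X hweight
    _ = ∑' k : ℕ,
          ENNReal.ofReal (exp (-(t * b)) * (exp (t * c * k) * (exp (-θ) * θ ^ k / k !))) := by
        refine tsum_congr fun k => ?_
        rw [show μ (X ⁻¹' {k}) = _ from hX k, ← ENNReal.ofReal_mul (exp_nonneg _),
          ← mul_assoc, ← exp_add]
        ring_nf
    _ = ENNReal.ofReal (exp (θ * (exp (t * c) - 1) - t * b)) := by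
        rw [← ENNReal.ofReal_tsum_of_nonneg (fun k => by positivity) hsum.summable,
          hsum.tsum_eq, ← exp_add]
        ring_nf

theorem poisson_chernoff_exponent_half {θ1 θ2 : ℝ} (h1 : 0 < θ1) (h2 : 0 < θ2) :
    θ1 * (exp (1 / 2 * log (θ2 / θ1)) - 1) - 1 / 2 * (θ2 - θ1) = -(√θ1 - √θ2) ^ 2 / 2 := by
  have hexp : exp (1 / 2 * log (θ2 / θ1)) = √θ2 / √θ1 := by
    rw [← sqrt_div' _ h1.le, sqrt_eq_rpow, rpow_def_of_pos (div_pos h2 h1), mul_comm]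
  have hs1 : 0 < √θ1 := sqrt_pos.2 h1
  rw [hexp]
  field_simp
  nlinarith [sq_sqrt h1.le, sq_sqrt h2.le]

theorem poisson_single_loglik_tail_bound_general
    {Ω : Type*} [MeasurableSpace Ω] (μ : Measure Ω)
    (θ1 θ2 : ℝ) (h1 : 0 < θ1) (h2 : 0 < θ2)
    (X : Ω → ℕ)
    (hX : ∀ k : ℕ, μ {a | X a = k}
        = ENNReal.ofReal (Real.exp (-θ1) * θ1 ^ k / (Nat.factorial k))) :
    (μ {a | (X a : ℝ) * Real.log (θ2 / θ1) ≥ θ2 - θ1}).toReal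
      ≤ Real.exp (-(Real.sqrt θ1 - Real.sqrt θ2) ^ 2 / 2) := by
  have hbound := poisson_chernoff_bound μ h1.le hX (t := 1 / 2) (by norm_num) (θ2 - θ1)
    (log (θ2 / θ1))
  rw [poisson_chernoff_exponent_half h1 h2] at hbound
  exact ENNReal.toReal_le_of_le_ofReal (exp_nonneg _) hbound

/-- Chernoff bound for the Poisson likelihood-ratio test: for `X ~ Poisson(θ1)` with
`θ1 ≠ θ2`, `P(X log(θ2/θ1) ≥ θ2 - θ1) ≤ exp(-(√θ1 - √θ2)²/2)`. -/
theorem poisson_single_loglik_tail_bound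
    {Ω : Type*} [MeasurableSpace Ω] (μ : Measure Ω) [IsProbabilityMeasure μ]
    (θ1 θ2 : ℝ) (h1 : 0 < θ1) (h2 : 0 < θ2) (hne : θ1 ≠ θ2)
    (X : Ω → ℕ)
    (hX : ∀ k : ℕ, μ {a | X a = k}
        = ENNReal.ofReal (Real.exp (-θ1) * θ1 ^ k / (Nat.factorial k))) :
    (μ {a | (X a : ℝ) * Real.log (θ2 / θ1) ≥ θ2 - θ1}).toReal
      ≤ Real.exp (-(Real.sqrt θ1 - Real.sqrt θ2) ^ 2 / 2) :=
  poisson_single_loglik_tail_bound_general μ θ1 θ2 h1 h2 X hX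
end

section
/- Let θ > 0 and X ~ Poisson(θ). For every λ ∈ (0, 1/2), log E[exp(λ(√X − E√X))] ≤ λ(e^λ − 1)·θ·E[1/(4X+1)] ≤ λ(e^λ − 1). In particular √X − E[√X] is sub-exponential with norm bounded by an absolute constant. -/
/-!
Herbst's argument. Write `F s = E[exp (s √X)]`. Stein's identity `E[X f(X)] = θ E[f(X + 1)]` gives
`F' s = E[√X exp (s √X)] = θ E[exp (s √(X + 1)) / √(X + 1)]`. Since `d = √(X + 1) - √X ∈ [0, 1]`
and `d² (4X + 1) ≤ 1`, expanding `exp (s d)` to second order bounds the shifted term by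
`exp (s √X) (1 / √(X + 1) + (s + eˢ - 1) / (4X + 1))`. The factor `exp (s √X)` increases and the
weights decrease in `X`, so Chebyshev's association inequality splits the expectations; with
`E √X = θ E[1 / √(X + 1)]` (Stein at `s = 0`) this gives
`(log F)' s ≤ E √X + θ (s + eˢ - 1) E[1 / (4X + 1)]`, which integrates to the bound.
Finally `θ E[1 / (4X + 1)] ≤ θ E[1 / (X + 1)] = P(X ≥ 1) ≤ 1`.
-/

open MeasureTheory ProbabilityTheory Real Set
open scoped NNReal Nat

namespace MeasureTheory

-- Carathéodory's criterion: the measurable hulls of `s` and `sᶜ` overlap in a null set.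
theorem nullMeasurableSet_of_measure_add_measure_compl_le {Ω : Type*} [MeasurableSpace Ω]
    {μ : Measure Ω} [IsFiniteMeasure μ] {s : Set Ω} (h : μ s + μ sᶜ ≤ μ univ) :
    NullMeasurableSet s μ := by
  set T := toMeasurable μ s
  set B := toMeasurable μ sᶜ
  have hTB : μ (T ∩ B) = 0 := by
    have hcover : T ∪ B = univ :=
      eq_univ_of_subset (union_subset_union (subset_toMeasurable μ s)
        (subset_toMeasurable μ sᶜ)) (union_compl_self s)
    have := measure_union_add_inter (μ := μ) T (measurableSet_toMeasurable μ sᶜ)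
    rw [hcover, measure_toMeasurable, measure_toMeasurable] at this
    exact nonpos_iff_eq_zero.1 <| ENNReal.le_of_add_le_add_left (measure_ne_top μ univ)
      (by rw [this, add_zero]; exact h)
  have hsplit : s = Bᶜ ∪ (s ∩ B) := by
    have : Bᶜ ⊆ s := compl_subset_comm.1 (subset_toMeasurable μ sᶜ)
    rw [union_inter_distrib_left, compl_union_self, inter_univ, union_eq_right.2 this]
  rw [hsplit]
  exact (measurableSet_toMeasurable μ sᶜ).compl.nullMeasurableSet.union
    (NullMeasurableSet.of_null (measure_mono_null (inter_subset_inter_left _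
      (subset_toMeasurable μ s)) hTB))

theorem measure_preimage_le_of_measure_preimage_singleton {Ω α : Type*} [MeasurableSpace Ω]
    [MeasurableSpace α] [Countable α] [MeasurableSingletonClass α] {μ : Measure Ω}
    {ν : Measure α} {X : Ω → α} (hX : ∀ a, μ (X ⁻¹' {a}) = ν {a}) (t : Set α) :
    μ (X ⁻¹' t) ≤ ν t := by
  calc μ (X ⁻¹' t) = μ (⋃ a ∈ t, X ⁻¹' {a}) := by rw [biUnion_preimage_singleton]
    _ ≤ ∑' a : t, μ (X ⁻¹' {(a : α)}) := measure_biUnion_le μ t.to_countable _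
    _ = ν t := by
      simpa [hX] using tsum_measure_preimage_singleton (μ := ν) t.to_countable (f := id)
        (fun _ _ => measurableSet_singleton _)

theorem integral_mul_le_integral_mul_integral_of_antivary {α : Type*} [MeasurableSpace α]
    {ν : Measure α} [IsProbabilityMeasure ν] {f g : α → ℝ} (hfg : Antivary f g)
    (hf : Integrable f ν) (hg : Integrable g ν) (hfg_int : Integrable (fun x => f x * g x) ν) :
    ∫ x, f x * g x ∂ν ≤ (∫ x, f x ∂ν) * ∫ x, g x ∂ν := by
  have hdiag₁ : Integrable (fun p : α × α => f p.1 * g p.1) (ν.prod ν) := hfg_int.comp_fst ν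
  have hdiag₂ : Integrable (fun p : α × α => f p.2 * g p.2) (ν.prod ν) := hfg_int.comp_snd ν
  have hcross₁ : Integrable (fun p : α × α => f p.1 * g p.2) (ν.prod ν) := hf.mul_prod hg
  have hcross₂ : Integrable (fun p : α × α => g p.1 * f p.2) (ν.prod ν) := hg.mul_prod hf
  have hexpand : ∫ p, (f p.1 - f p.2) * (g p.1 - g p.2) ∂(ν.prod ν)
      = 2 * ∫ x, f x * g x ∂ν - 2 * ((∫ x, f x ∂ν) * ∫ x, g x ∂ν) := by
    calc ∫ p, (f p.1 - f p.2) * (g p.1 - g p.2) ∂(ν.prod ν)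
        = ∫ p, (f p.1 * g p.1 + f p.2 * g p.2) - (f p.1 * g p.2 + g p.1 * f p.2) ∂(ν.prod ν) := by
          congr 1; ext p; ring
      _ = 2 * ∫ x, f x * g x ∂ν - 2 * ((∫ x, f x ∂ν) * ∫ x, g x ∂ν) := by
          rw [integral_sub (by exact hdiag₁.add hdiag₂) (by exact hcross₁.add hcross₂),
            integral_add hdiag₁ hdiag₂,
            integral_add hcross₁ hcross₂, integral_fun_fst (fun x => f x * g x),
            integral_fun_snd (fun x => f x * g x), integral_prod_mul f g, integral_prod_mul g f]
          simp only [probReal_univ, one_smul]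
          ring
  have hnonpos : ∫ p, (f p.1 - f p.2) * (g p.1 - g p.2) ∂(ν.prod ν) ≤ 0 :=
    integral_nonpos fun p => hfg.sub_mul_sub_nonpos p.2 p.1
  linarith

end MeasureTheory

theorem le_of_le_of_hasDerivAt_le {f f' g g' : ℝ → ℝ} {a b : ℝ} (hab : a ≤ b)
    (hf : ∀ x, HasDerivAt f (f' x) x) (hg : ∀ x, HasDerivAt g (g' x) x) (ha : f a ≤ g a)
    (hderiv : ∀ x ∈ Ico a b, f' x ≤ g' x) : f b ≤ g b :=
  image_le_of_deriv_right_le_deriv_boundary (fun x _ => (hf x).continuousAt.continuousWithinAt)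
    (fun x _ => (hf x).hasDerivWithinAt) ha (fun x _ => (hg x).continuousAt.continuousWithinAt)
    (fun x _ => (hg x).hasDerivWithinAt) hderiv (right_mem_Icc.2 hab)

theorem log_sub_log_le_of_hasDerivAt_le_mul {F F' u u' : ℝ → ℝ} {a b : ℝ} (hab : a ≤ b)
    (hF : ∀ x, HasDerivAt F (F' x) x) (hu : ∀ x, HasDerivAt u (u' x) x) (hpos : ∀ x, 0 < F x)
    (hderiv : ∀ x ∈ Ico a b, F' x ≤ u' x * F x) : log (F b) - log (F a) ≤ u b - u a := by
  have := le_of_le_of_hasDerivAt_le hab (fun x => (hF x).log (hpos x).ne')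
    (fun x => (hu x).const_add (log (F a) - u a)) (by simp)
    (fun x hx => (div_le_iff₀ (hpos x)).2 (hderiv x hx))
  linarith

theorem exp_mul_le_one_add_mul_exp_sub_one (s : ℝ) {d : ℝ} (hd₀ : 0 ≤ d) (hd₁ : d ≤ 1) :
    exp (s * d) ≤ 1 + d * (exp s - 1) := by
  have := convexOn_exp.2 (mem_univ 0) (mem_univ s) (sub_nonneg.2 hd₁) hd₀ (by ring)
  simp only [smul_eq_mul, mul_zero, zero_add, exp_zero] at this
  rw [mul_comm]
  linarith

theorem exp_mul_le_one_add_mul_add_mul_sq {s d : ℝ} (hs : 0 ≤ s) (hd₀ : 0 ≤ d) (hd₁ : d ≤ 1) :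
    exp (s * d) ≤ 1 + s * d + (exp s - 1 - s) * d ^ 2 := by
  have hf : ∀ x, HasDerivAt (fun x => exp (x * d)) (exp (x * d) * d) x := fun x =>
    ((hasDerivAt_id x).mul_const d).exp.congr_deriv (by simp)
  have hg : ∀ x, HasDerivAt (fun x => 1 + x * d + (exp x - 1 - x) * d ^ 2)
      (d + (exp x - 1) * d ^ 2) x := fun x =>
    ((((hasDerivAt_id x).mul_const d).const_add 1).add
      ((((hasDerivAt_exp x).sub_const 1).sub (hasDerivAt_id x)).mul_const (d ^ 2))).congr_deriv
      (by simp)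
  refine le_of_le_of_hasDerivAt_le hs hf hg (by simp) fun x _ => ?_
  nlinarith [exp_mul_le_one_add_mul_exp_sub_one x hd₀ hd₁]

theorem sqrt_add_one_sub_sqrt_mul_le {x : ℝ} (hx : 0 ≤ x) :
    (√(x + 1) - √x) * (4 * x + 1) ≤ 2 * √(x + 1) := by
  have ha := sq_sqrt hx
  have hb := sq_sqrt (by linarith : 0 ≤ x + 1)
  have hab : √x ≤ √(x + 1) := sqrt_le_sqrt (by linarith)
  nlinarith [sqrt_nonneg x, mul_nonneg (sqrt_nonneg x) (sub_nonneg.2 hab)]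

theorem sq_sqrt_add_one_sub_sqrt_mul_le {x : ℝ} (hx : 0 ≤ x) :
    (√(x + 1) - √x) ^ 2 * (4 * x + 1) ≤ 1 := by
  have ha := sq_sqrt hx
  have hb := sq_sqrt (by linarith : 0 ≤ x + 1)
  have hab : √x ≤ √(x + 1) := sqrt_le_sqrt (by linarith)
  nlinarith [sqrt_nonneg x, mul_nonneg (sqrt_nonneg x) (sub_nonneg.2 hab)]

theorem exp_mul_sqrt_add_one_div_le {s x : ℝ} (hs : 0 ≤ s) (hx : 0 ≤ x) :
    exp (s * √(x + 1)) / √(x + 1)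
      ≤ exp (s * √x) * (1 / √(x + 1)) + (s + exp s - 1) * (exp (s * √x) * (1 / (4 * x + 1))) := by
  set d := √(x + 1) - √x with hd
  have hb₁ : 1 ≤ √(x + 1) := one_le_sqrt.2 (by linarith)
  have hd₀ : 0 ≤ d := sub_nonneg.2 (sqrt_le_sqrt (by linarith))
  have hd₁ : d ≤ 1 := by nlinarith [sq_sqrt hx, sq_sqrt (by linarith : 0 ≤ x + 1), sqrt_nonneg x]
  have hc : 0 ≤ exp s - 1 - s := by linarith [add_one_le_exp s]
  have hlin : s * d * (4 * x + 1) ≤ s * (2 * √(x + 1)) := by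
    rw [mul_assoc]; exact mul_le_mul_of_nonneg_left (sqrt_add_one_sub_sqrt_mul_le hx) hs
  have hquad : (exp s - 1 - s) * d ^ 2 * (4 * x + 1) ≤ (exp s - 1 - s) * √(x + 1) := by
    rw [mul_assoc]
    exact mul_le_mul_of_nonneg_left ((sq_sqrt_add_one_sub_sqrt_mul_le hx).trans hb₁) hc
  have hcorr : (s * d + (exp s - 1 - s) * d ^ 2) / √(x + 1) ≤ (s + exp s - 1) / (4 * x + 1) := by
    rw [div_le_div_iff₀ (by linarith) (by linarith)]
    linarith
  calc exp (s * √(x + 1)) / √(x + 1) = exp (s * √x) * (exp (s * d) / √(x + 1)) := by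
        rw [hd, mul_div_assoc', ← exp_add]; ring_nf
    _ ≤ exp (s * √x) * ((1 + s * d + (exp s - 1 - s) * d ^ 2) / √(x + 1)) := by
        gcongr; exact exp_mul_le_one_add_mul_add_mul_sq hs hd₀ hd₁
    _ ≤ exp (s * √x) * (1 / √(x + 1) + (s + exp s - 1) / (4 * x + 1)) := by
        rw [add_assoc, add_div]; gcongr
    _ = _ := by ring

theorem norm_one_div_le_one_of_one_le {x : ℝ} (hx : 1 ≤ x) : ‖1 / x‖ ≤ 1 := by
  rw [norm_div, norm_one, norm_of_nonneg (by linarith)]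
  exact div_le_one_of_le₀ hx (by linarith)

theorem exp_mul_sqrt_le_exp_abs_pow (s : ℝ) (n : ℕ) : exp (s * √n) ≤ exp |s| ^ n := by
  have hsqrt : √(n : ℝ) ≤ n :=
    sqrt_le_iff.2 ⟨n.cast_nonneg, by exact_mod_cast Nat.le_self_pow two_ne_zero n⟩
  rw [← exp_nat_mul, exp_le_exp, mul_comm (n : ℝ)]
  exact (mul_le_mul_of_nonneg_right (le_abs_self s) (sqrt_nonneg _)).trans
    (mul_le_mul_of_nonneg_left hsqrt (abs_nonneg s))

namespace ProbabilityTheory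

theorem hasLaw_of_measure_preimage_singleton {Ω α : Type*} [MeasurableSpace Ω]
    [MeasurableSpace α] [Countable α] [MeasurableSingletonClass α] {μ : Measure Ω}
    [IsProbabilityMeasure μ] {ν : Measure α} [IsProbabilityMeasure ν] {X : Ω → α}
    (hX : ∀ a, μ (X ⁻¹' {a}) = ν {a}) : HasLaw X ν μ := by
  have hmeas : AEMeasurable X μ := by
    refine NullMeasurable.aemeasurable fun t _ =>
      nullMeasurableSet_of_measure_add_measure_compl_le ?_
    calc μ (X ⁻¹' t) + μ (X ⁻¹' t)ᶜ ≤ ν t + ν tᶜ :=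
          add_le_add (measure_preimage_le_of_measure_preimage_singleton hX t)
            (measure_preimage_le_of_measure_preimage_singleton hX tᶜ)
      _ = μ univ := by
        rw [measure_add_measure_compl t.to_countable.measurableSet, measure_univ, measure_univ]
  exact ⟨hmeas, Measure.ext_of_singleton fun a => by
    rw [Measure.map_apply_of_aemeasurable hmeas (measurableSet_singleton a), hX]⟩

variable (r : ℝ≥0)

theorem integrable_poissonMeasure_of_abs_le {f : ℕ → ℝ} {C c : ℝ} (hf : ∀ n, |f n| ≤ C * c ^ n) :
    Integrable f Po(r) := by
  refine integrable_poissonMeasure_iff.2 <| .of_nonneg_of_le (fun n => by positivity)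
    (fun n => mul_le_mul_of_nonneg_left (hf n) (by positivity))
    (((summable_pow_div_factorial (r * c)).mul_left (C * exp (-r))).congr fun n => ?_)
  rw [mul_pow]
  ring

theorem integrable_exp_mul_sqrt_poissonMeasure (s : ℝ) :
    Integrable (fun n : ℕ => exp (s * √n)) Po(r) :=
  integrable_poissonMeasure_of_abs_le r (C := 1) fun n => by
    rw [abs_of_pos (exp_pos _), one_mul]
    exact exp_mul_sqrt_le_exp_abs_pow s n

-- No integrability is needed: both sides are `tsum`s, termwise equal after an index shift.
theorem integral_mul_poissonMeasure (f : ℕ → ℝ) :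
    ∫ n, n * f n ∂Po(r) = r * ∫ n, f (n + 1) ∂Po(r) := by
  rw [integral_poissonMeasure, integral_poissonMeasure, ← tsum_mul_left,
    ← Nat.succ_injective.tsum_eq]
  · congr 1
    ext n
    simp only [smul_eq_mul, Nat.succ_eq_add_one, Nat.factorial_succ, pow_succ]
    push_cast
    field_simp
  · rintro (_ | n) hn
    · simp at hn
    · exact ⟨n, rfl⟩

theorem integral_sqrt_mul_exp_poissonMeasure (s : ℝ) :
    ∫ n, √n * exp (s * √n) ∂Po(r) = r * ∫ n, exp (s * √(n + 1)) / √(n + 1) ∂Po(r) := by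
  calc ∫ n, √n * exp (s * √n) ∂Po(r) = ∫ n, n * (exp (s * √n) / √n) ∂Po(r) := by
        congr 1; ext n; rw [mul_div_left_comm, div_sqrt, mul_comm]
    _ = r * ∫ n, exp (s * √(n + 1)) / √(n + 1) ∂Po(r) := by
        rw [integral_mul_poissonMeasure]; push_cast; rfl

theorem integrable_one_div_poissonMeasure {w : ℕ → ℝ} (hw : ∀ n, 1 ≤ w n) :
    Integrable (fun n => 1 / w n) Po(r) :=
  .of_bound .of_discrete 1 (ae_of_all _ fun n => norm_one_div_le_one_of_one_le (hw n))

theorem integrable_exp_mul_sqrt_mul_one_div_poissonMeasure (s : ℝ) {w : ℕ → ℝ}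
    (hw : ∀ n, 1 ≤ w n) : Integrable (fun n : ℕ => exp (s * √n) * (1 / w n)) Po(r) :=
  (integrable_exp_mul_sqrt_poissonMeasure r s).mul_bdd .of_discrete
    (ae_of_all _ fun n => norm_one_div_le_one_of_one_le (hw n))

theorem integral_exp_mul_sqrt_mul_one_div_le {s : ℝ} (hs : 0 ≤ s) {w : ℕ → ℝ}
    (hw_mono : Monotone w) (hw : ∀ n, 1 ≤ w n) :
    ∫ n, exp (s * √n) * (1 / w n) ∂Po(r)
      ≤ (∫ n, exp (s * √n) ∂Po(r)) * ∫ n, 1 / w n ∂Po(r) := by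
  have hmono : Monotone fun n : ℕ => exp (s * √n) := fun m n hmn => by
    dsimp only; gcongr
  have hanti : Antitone fun n => 1 / w n := fun m n hmn =>
    one_div_le_one_div_of_le (zero_lt_one.trans_le (hw m)) (hw_mono hmn)
  exact integral_mul_le_integral_mul_integral_of_antivary (hmono.antivary hanti)
    (integrable_exp_mul_sqrt_poissonMeasure r s) (integrable_one_div_poissonMeasure r hw)
    (integrable_exp_mul_sqrt_mul_one_div_poissonMeasure r s hw)

theorem integral_exp_mul_sqrt_add_one_div_le {s : ℝ} (hs : 0 ≤ s) :
    ∫ n, exp (s * √((n : ℝ) + 1)) / √((n : ℝ) + 1) ∂Po(r)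
      ≤ ∫ n, exp (s * √n) * (1 / √((n : ℝ) + 1)) ∂Po(r)
        + (s + exp s - 1) * ∫ n, exp (s * √n) * (1 / (4 * (n : ℝ) + 1)) ∂Po(r) := by
  have hsqrt_ge (n : ℕ) : 1 ≤ √((n : ℝ) + 1) := one_le_sqrt.2 (by simp)
  have hFg₁ := integrable_exp_mul_sqrt_mul_one_div_poissonMeasure r s hsqrt_ge
  have hFg₂ := integrable_exp_mul_sqrt_mul_one_div_poissonMeasure r s
    (w := fun n => 4 * (n : ℝ) + 1) (by simp)
  have hshift : Integrable (fun n : ℕ => exp (s * √((n : ℝ) + 1)) / √((n : ℝ) + 1)) Po(r) :=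
    integrable_poissonMeasure_of_abs_le r (C := exp |s|) fun n => by
      rw [abs_of_nonneg (by positivity), ← pow_succ']
      calc exp (s * √((n : ℝ) + 1)) / √((n : ℝ) + 1) ≤ exp (s * √((n : ℝ) + 1)) :=
            div_le_self (exp_pos _).le (hsqrt_ge n)
        _ ≤ exp |s| ^ (n + 1) := mod_cast exp_mul_sqrt_le_exp_abs_pow s (n + 1)
  rw [← integral_const_mul, ← integral_add hFg₁ (hFg₂.const_mul _)]
  exact integral_mono hshift (hFg₁.add (hFg₂.const_mul _)) fun n =>
    exp_mul_sqrt_add_one_div_le hs n.cast_nonneg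

theorem integral_sqrt_mul_exp_le {s : ℝ} (hs : 0 ≤ s) :
    ∫ n, √n * exp (s * √n) ∂Po(r)
      ≤ (∫ n, √n ∂Po(r) + r * (s + exp s - 1) * ∫ n, 1 / (4 * (n : ℝ) + 1) ∂Po(r))
        * ∫ n, exp (s * √n) ∂Po(r) := by
  have hc : 0 ≤ s + exp s - 1 := by linarith [one_le_exp hs]
  have hmean := integral_sqrt_mul_exp_poissonMeasure r 0
  simp only [zero_mul, exp_zero, mul_one] at hmean
  calc ∫ n, √n * exp (s * √n) ∂Po(r)
      = r * ∫ n, exp (s * √((n : ℝ) + 1)) / √((n : ℝ) + 1) ∂Po(r) :=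
        integral_sqrt_mul_exp_poissonMeasure r s
    _ ≤ r * (∫ n, exp (s * √n) * (1 / √((n : ℝ) + 1)) ∂Po(r)
          + (s + exp s - 1) * ∫ n, exp (s * √n) * (1 / (4 * (n : ℝ) + 1)) ∂Po(r)) :=
        mul_le_mul_of_nonneg_left (integral_exp_mul_sqrt_add_one_div_le r hs) r.2
    _ ≤ r * ((∫ n, exp (s * √n) ∂Po(r)) * (∫ n, 1 / √((n : ℝ) + 1) ∂Po(r))
          + (s + exp s - 1) * ((∫ n, exp (s * √n) ∂Po(r))
            * ∫ n, 1 / (4 * (n : ℝ) + 1) ∂Po(r))) := by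
        gcongr
        · exact integral_exp_mul_sqrt_mul_one_div_le r hs (fun m n hmn => by gcongr)
            fun n => one_le_sqrt.2 (by simp)
        · exact integral_exp_mul_sqrt_mul_one_div_le r hs (fun m n hmn => by gcongr)
            fun n => by simp
    _ = _ := by rw [hmean]; ring

theorem log_integral_exp_mul_sqrt_sub_le {t : ℝ} (ht : 0 ≤ t) :
    log (∫ n, exp (t * (√n - ∫ m, √m ∂Po(r))) ∂Po(r))
      ≤ t * (exp t - 1) * r * ∫ n, 1 / (4 * (n : ℝ) + 1) ∂Po(r) := by
  set M := ∫ m, √m ∂Po(r)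
  set E := ∫ n, 1 / (4 * (n : ℝ) + 1) ∂Po(r)
  set F := mgf (fun n : ℕ => √n) Po(r)
  have hE : 0 ≤ E := integral_nonneg fun n => by positivity
  have hF (s : ℝ) : HasDerivAt F (∫ n, √n * exp (s * √n) ∂Po(r)) s := by
    refine hasDerivAt_mgf ?_
    rw [show integrableExpSet (fun n : ℕ => √n) Po(r) = univ from
      eq_univ_of_forall (integrable_exp_mul_sqrt_poissonMeasure r), interior_univ]
    trivial
  have hu (s : ℝ) : HasDerivAt (fun s => s * M + r * E * (s * (exp s - 1)))
      (M + r * E * (exp s - 1 + s * exp s)) s := by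
    have := (((hasDerivAt_id s).mul_const M).add
      (((hasDerivAt_id s).mul ((hasDerivAt_exp s).sub_const 1)).const_mul (r * E)))
    exact this.congr_deriv (by simp only [id]; ring)
  have hpos (s : ℝ) : 0 < F s := mgf_pos (integrable_exp_mul_sqrt_poissonMeasure r s)
  -- The comparison function `s M + r E s (eˢ - 1)` has derivative `≥ M + r E (s + eˢ - 1)`
  -- since `s ≤ s eˢ`, and its value at `t`, minus `t M`, is the claimed bound.
  have hgronwall := log_sub_log_le_of_hasDerivAt_le_mul ht hF hu hpos fun s hs => by
    refine (integral_sqrt_mul_exp_le r hs.1).trans (mul_le_mul_of_nonneg_right ?_ (hpos s).le)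
    have : r * (s + exp s - 1) * E ≤ r * E * (exp s - 1 + s * exp s) := by
      rw [mul_right_comm]
      refine mul_le_mul_of_nonneg_left ?_ (mul_nonneg r.2 hE)
      linarith [le_mul_of_one_le_right hs.1 (one_le_exp hs.1)]
    linarith
  have hcentered : ∫ n, exp (t * (√n - M)) ∂Po(r) = F t * exp (-(t * M)) := by
    rw [show F t = ∫ n, exp (t * √n) ∂Po(r) from rfl, ← integral_mul_const]
    congr 1
    ext n
    rw [← exp_add]
    ring_nf
  rw [hcentered, log_mul (hpos t).ne' (exp_pos _).ne', log_exp]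
  simp only [F, mgf_zero, log_one] at hgronwall
  linarith

theorem mul_integral_one_div_four_mul_add_one_le_one :
    r * ∫ n, 1 / (4 * (n : ℝ) + 1) ∂Po(r) ≤ 1 := by
  have hinv := integrable_one_div_poissonMeasure r (w := fun n => (n : ℝ) + 1) (by simp)
  calc r * ∫ n, 1 / (4 * (n : ℝ) + 1) ∂Po(r) ≤ r * ∫ n, 1 / ((n : ℝ) + 1) ∂Po(r) := by
        refine mul_le_mul_of_nonneg_left (integral_mono_of_nonneg (ae_of_all _ fun n => ?_) hinv
          (ae_of_all _ fun n => ?_)) r.2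
        · positivity
        · dsimp only; gcongr; linarith [(n.cast_nonneg : (0 : ℝ) ≤ n)]
    _ = ∫ n, n * (1 / (n : ℝ)) ∂Po(r) := by
        rw [integral_mul_poissonMeasure]; push_cast; rfl
    _ ≤ ∫ _, 1 ∂Po(r) := integral_mono_of_nonneg (ae_of_all _ fun n => by positivity)
        (integrable_const 1) (ae_of_all _ fun n => by
          dsimp only; rw [one_div]; exact mul_inv_le_one)
    _ = 1 := by simp

end ProbabilityTheory

/-- Sub-exponential bound for `√X - E√X` when `X ~ Poisson(θ)`: for `λ ∈ (0, 1/2)`,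
`log E[exp(λ(√X - E√X))] ≤ λ(e^λ - 1) θ E[1/(4X+1)] ≤ λ(e^λ - 1)`. -/
theorem poisson_sqrt_subexponential
    {Ω : Type*} [MeasurableSpace Ω] (μ : Measure Ω) [IsProbabilityMeasure μ]
    (θ : ℝ) (hθ : 0 < θ)
    (X : Ω → ℕ)
    (hX : ∀ k : ℕ, μ {a | X a = k}
        = ENNReal.ofReal (Real.exp (-θ) * θ ^ k / (Nat.factorial k)))
    (lam : ℝ) (hlam : lam ∈ Set.Ioo (0:ℝ) (1/2)) :
    Real.log (∫ a, Real.exp (lam * (Real.sqrt (X a) - ∫ b, Real.sqrt (X b) ∂μ)) ∂μ)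
      ≤ lam * (Real.exp lam - 1) * θ * ∫ a, 1 / (4 * (X a : ℝ) + 1) ∂μ
    ∧ lam * (Real.exp lam - 1) * θ * (∫ a, 1 / (4 * (X a : ℝ) + 1) ∂μ)
        ≤ lam * (Real.exp lam - 1) := by
  lift θ to ℝ≥0 using hθ.le
  have hlaw : HasLaw X Po(θ) μ :=
    hasLaw_of_measure_preimage_singleton fun k => by rw [poissonMeasure_singleton]; exact hX k
  have hcomp (f : ℕ → ℝ) : ∫ a, f (X a) ∂μ = ∫ n, f n ∂Po(θ) := hlaw.integral_comp .of_discrete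
  have hmean : ∫ b, √(X b : ℝ) ∂μ = ∫ n, √n ∂Po(θ) := hcomp fun n => √n
  have hcentered : ∫ a, exp (lam * (√(X a : ℝ) - ∫ n, √n ∂Po(θ))) ∂μ
      = ∫ n, exp (lam * (√n - ∫ m, √m ∂Po(θ))) ∂Po(θ) :=
    hcomp fun n => exp (lam * (√n - ∫ m, √m ∂Po(θ)))
  have hweight : ∫ a, 1 / (4 * (X a : ℝ) + 1) ∂μ = ∫ n, 1 / (4 * (n : ℝ) + 1) ∂Po(θ) :=
    hcomp fun n => 1 / (4 * (n : ℝ) + 1)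
  rw [hmean, hcentered, hweight]
  refine ⟨log_integral_exp_mul_sqrt_sub_le θ hlam.1.le, ?_⟩
  have hfactor : 0 ≤ lam * (exp lam - 1) :=
    mul_nonneg hlam.1.le (sub_nonneg.2 (one_le_exp hlam.1.le))
  rw [mul_assoc _ (θ : ℝ)]
  exact mul_le_of_le_one_right hfactor (mul_integral_one_div_four_mul_add_one_le_one θ)
end

section
/- Let n ≥ 1, α ≥ 1, and let z, z' ∈ {1,2}^n be label vectors such that each of the four sets {i : z_i = m} and {i : z'_i = m} (m ∈ {1,2}) has cardinality at least n/(2α), and such that (1/n)·min over permutations π of {1,2} of #{i : z_i ≠ π(z'_i)} ≤ c/α for some constant c ∈ [0, 1/2). Define ς : {1,2} → {1,2} by ς(k) = argmax_{m∈{1,2}} #({i : z_i = m} ∩ {i : z'_i = k}). Then ς is a bijection (a permutation of {1,2}) and (1/n)·#{i : z_i ≠ ς(z'_i)} = min_{π} (1/n)·#{i : z_i ≠ π(z'_i)}. -/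
open Finset

lemma fin2_cases (m k : Fin 2) : m = k ∨ m = k + 1 := by revert m k; decide

lemma fin2_add_one_ne (k : Fin 2) : k + 1 ≠ k := by revert k; decide

lemma fin2_add_add (k : Fin 2) : k + 1 + 1 = k := by revert k; decide

lemma perm_fin2_add_one (π : Equiv.Perm (Fin 2)) (k : Fin 2) : π (k + 1) = π k + 1 := by
  revert π k; decide

lemma perm_fin2_dichotomy (ρ π : Equiv.Perm (Fin 2)) :
    (∀ x, ρ x = π x) ∨ (∀ x, ρ x ≠ π x) := by revert ρ π; decide

/-- Label alignment: if the two clusterings `z, z'` have balanced clusters and are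
close up to a permutation of labels, then the greedy argmax map `ς` is a permutation
and achieves the minimal mis-matching proportion. -/
theorem label_alignment (n : ℕ) (hn : 1 ≤ n) (α c : ℝ) (hα : 1 ≤ α)
    (hc0 : 0 ≤ c) (hc : c < 1/2)
    (z z' : Fin n → Fin 2)
    (hz : ∀ m : Fin 2,
      (n : ℝ) / (2 * α) ≤ ((Finset.univ.filter (fun i => z i = m)).card : ℝ))
    (hz' : ∀ m : Fin 2,
      (n : ℝ) / (2 * α) ≤ ((Finset.univ.filter (fun i => z' i = m)).card : ℝ))
    (hclose : ∃ π : Equiv.Perm (Fin 2),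
      ((Finset.univ.filter (fun i => z i ≠ π (z' i))).card : ℝ) / n ≤ c / α)
    (ς : Fin 2 → Fin 2)
    (hς : ∀ k m : Fin 2,
      (Finset.univ.filter (fun i => z i = m ∧ z' i = k)).card
        ≤ (Finset.univ.filter (fun i => z i = ς k ∧ z' i = k)).card) :
    Function.Bijective ς
    ∧ ∀ π : Equiv.Perm (Fin 2),
        ((Finset.univ.filter (fun i => z i ≠ ς (z' i))).card : ℝ) / n
          ≤ ((Finset.univ.filter (fun i => z i ≠ π (z' i))).card : ℝ) / n := by
  obtain ⟨π, hπ⟩ := hclose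
  have hn0 : (0:ℝ) < n := by exact_mod_cast Nat.lt_of_lt_of_le Nat.zero_lt_one hn
  have hα0 : (0:ℝ) < α := lt_of_lt_of_le one_pos hα
  set E : Finset (Fin n) := Finset.univ.filter (fun i => z i ≠ π (z' i)) with hEdef
  have hE : (E.card : ℝ) ≤ c * n / α := by
    rw [div_le_div_iff₀ hn0 hα0] at hπ
    rw [le_div_iff₀ hα0]
    linarith
  -- notation for good/bad counts
  set good : Fin 2 → ℕ := fun k =>
    (Finset.univ.filter (fun i => z i = π k ∧ z' i = k)).card with hgood
  set bad : Fin 2 → ℕ := fun k =>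
    (Finset.univ.filter (fun i => z i = π (k+1) ∧ z' i = k)).card with hbad
  -- for i with z' i = k : z i ≠ π k ↔ z i = π (k+1)
  have key : ∀ (x k : Fin 2), x ≠ π k ↔ x = π (k+1) := by
    intro x k
    constructor
    · intro hx
      rcases fin2_cases x (π k) with h | h
      · exact absurd h hx
      · rcases fin2_cases (π (k+1)) (π k) with h' | h'
        · exact absurd (π.injective h') (fin2_add_one_ne k)
        · rw [h, ← h']
    · intro hx h
      rw [hx] at h
      exact fin2_add_one_ne k (π.injective h)
  -- E splits into bad 0 + bad 1
  have hEsplit : E.card = bad 0 + bad 1 := by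
    have h01 : ∀ i : Fin n, z' i = 0 ∨ z' i = 1 := by
      intro i; rcases fin2_cases (z' i) 0 with h | h
      · exact Or.inl h
      · exact Or.inr h
    have : E = (Finset.univ.filter (fun i => z i = π (0+1) ∧ z' i = 0)) ∪
        (Finset.univ.filter (fun i => z i = π (1+1) ∧ z' i = 1)) := by
      ext i
      simp only [hEdef, mem_filter, mem_union, mem_univ, true_and]
      constructor
      · intro hi
        rcases h01 i with h | h
        · left; rw [h] at hi ⊢; exact ⟨(key _ _).1 hi, rfl⟩
        · right; rw [h] at hi ⊢; exact ⟨(key _ _).1 hi, rfl⟩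
      · rintro (⟨h1, h2⟩ | ⟨h1, h2⟩) <;> rw [h2] <;> exact (key _ _).2 h1
    have hd : Disjoint (Finset.univ.filter (fun i => z i = π (0+1) ∧ z' i = 0))
        (Finset.univ.filter (fun i => z i = π (1+1) ∧ z' i = 1)) := by
      refine disjoint_left.2 ?_
      intro i hi hi'
      simp only [mem_filter] at hi hi'
      exact absurd (hi.2.2 ▸ hi'.2.2) (by decide)
    rw [this, card_union_of_disjoint hd]
  -- Z_{π k} splits into good k + bad (k+1)
  have hZsplit : ∀ k : Fin 2,
      (Finset.univ.filter (fun i => z i = π k)).card = good k + bad (k+1) := by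
    intro k
    have : (Finset.univ.filter (fun i => z i = π k)) =
        (Finset.univ.filter (fun i => z i = π k ∧ z' i = k)) ∪
        (Finset.univ.filter (fun i => z i = π (k+1+1) ∧ z' i = k+1)) := by
      ext i
      simp only [mem_filter, mem_union, mem_univ, true_and, fin2_add_add]
      constructor
      · intro hi
        rcases fin2_cases (z' i) k with h | h
        · exact Or.inl ⟨hi, h⟩
        · exact Or.inr ⟨hi, h⟩
      · rintro (⟨h1, _⟩ | ⟨h1, _⟩) <;> exact h1
    have hd : Disjoint (Finset.univ.filter (fun i => z i = π k ∧ z' i = k))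
        (Finset.univ.filter (fun i => z i = π (k+1+1) ∧ z' i = k+1)) := by
      refine disjoint_left.2 ?_
      intro i hi hi'
      simp only [mem_filter] at hi hi'
      exact fin2_add_one_ne k (hi'.2.2 ▸ hi.2.2)
    rw [this, card_union_of_disjoint hd]
  -- bad k < good k
  have hbg : ∀ k : Fin 2, bad k < good k := by
    intro k
    have hb01 : (bad 0 : ℝ) + bad 1 ≤ c * n / α := by
      rw [← Nat.cast_add, ← hEsplit]; exact hE
    have hbk : (bad k : ℝ) + bad (k+1) ≤ c * n / α := by
      rcases fin2_cases k 0 with h | h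
      · rw [h]; simpa using hb01
      · rw [h]
        simp only [show (0:Fin 2)+1 = 1 from rfl, show (1:Fin 2)+1 = 0 from rfl]
        linarith
    have hZ : (n : ℝ) / (2 * α) ≤ (good k : ℝ) + bad (k+1) := by
      have := hz (π k)
      rw [hZsplit k] at this
      push_cast at this
      exact this
    have hgap : c * n / α < (n:ℝ) / (2 * α) := by
      rw [div_lt_div_iff₀ hα0 (by positivity)]
      nlinarith [mul_pos hn0 hα0]
    have : (bad k : ℝ) < good k := by linarith
    exact_mod_cast this
  -- ς k = π k for all k
  have hςπ : ∀ k, ς k = π k := by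
    intro k
    rcases fin2_cases (ς k) (π k) with h | h
    · exact h
    · exfalso
      have h1 := hς k (π k)
      have h2 : (Finset.univ.filter (fun i => z i = ς k ∧ z' i = k)).card = bad k := by
        rw [hbad]; simp only [h, perm_fin2_add_one]
      rw [h2] at h1
      exact absurd (lt_of_le_of_lt h1 (hbg k)) (lt_irrefl _)
  have hςeq : ς = ⇑π := funext hςπ
  constructor
  · rw [hςeq]; exact π.bijective
  · intro ρ
    have hmis : (Finset.univ.filter (fun i => z i ≠ ς (z' i))) = E := by
      rw [hEdef]
      apply filter_congr
      intro i _
      rw [hςπ]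
    rw [hmis]
    rcases perm_fin2_dichotomy ρ π with h | h
    · have : (Finset.univ.filter (fun i => z i ≠ ρ (z' i))) = E := by
        rw [hEdef]
        apply filter_congr
        intro i _
        rw [h]
      rw [this]
    · -- every i is a mismatch for π or for ρ
      set F : Finset (Fin n) := Finset.univ.filter (fun i => z i ≠ ρ (z' i)) with hFdef
      have hcover : (Finset.univ : Finset (Fin n)) ⊆ E ∪ F := by
        intro i _
        simp only [hEdef, hFdef, mem_union, mem_filter, mem_univ, true_and]
        by_contra hcon
        push_neg at hcon
        obtain ⟨h1, h2⟩ := hcon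
        exact h (z' i) (h2 ▸ h1)
      have hcard : (n : ℝ) ≤ (E.card : ℝ) + F.card := by
        have := card_le_card hcover
        rw [card_univ, Fintype.card_fin] at this
        have := this.trans (card_union_le E F)
        exact_mod_cast this
      have hhalf : c * n / α ≤ n / 2 := by
        rw [div_le_div_iff₀ hα0 two_pos]
        nlinarith [mul_pos hn0 hα0]
      have hEF : (E.card : ℝ) ≤ F.card := by linarith
      gcongr
end
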